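/- arXiv:2302.06178 — 5 statements merged into one kernel-verified Lean document; each statement's English description precedes it below -/
import Mathlib

section
/- Let G be a nontrivial finite group and let P be a finite free G-poset. Then there exists a G-map from P to Q_0 G (equivalently, xind P = 0) if and only if for every p ∈ P and every g ∈ G with g ≠ 1, the elements p and g•p are not joined by a path in the comparability graph of P (i.e., they lie in different connected components). -/
/-!
A `G`-map `P → Q₀ G` is the same as an equivariant map `P → G` that is constant on comparable
pairs, i.e. constant on connected components of the comparability graph. Since `G` acts on these
components, such a map exists iff the action on components is free, which is exactly the condition
that no `p` is connected to `g • p` for `g ≠ 1`; a free action always admits an equivariant map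
to `G`, sending `g • r` to `g` for a chosen representative `r` of each orbit.
-/

/-- The comparability graph of a poset: distinct `u, v` are adjacent iff they are comparable. -/
def compGraph (P : Type*) [PartialOrder P] : SimpleGraph P where
  Adj u v := u ≠ v ∧ (u ≤ v ∨ v ≤ u)
  symm := ⟨fun _ _ h => ⟨h.1.symm, h.2.symm⟩⟩
  loopless := ⟨fun _ h => h.1 rfl⟩

/-- `f : P → G × {0,…,n}` is a `G`-map to the `G`-poset `Q_n G`, whose order is
`(g,i) ≤ (h,j)` iff `(g,i) = (h,j)` or `i < j`, and whose action is `g • (h,i) = (g h, i)`. -/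
def IsGMapToQ (G : Type*) [Group G] {P : Type*} [PartialOrder P] [MulAction G P]
    (n : ℕ) (f : P → G × Fin (n + 1)) : Prop :=
  (∀ p q : P, p ≤ q → f p = f q ∨ (f p).2 < (f q).2) ∧
  ∀ (g : G) (p : P), f (g • p) = (g * (f p).1, (f p).2)

theorem MulAction.exists_equivariant_to_group_of_free {G X : Type*} [Group G] [MulAction G X]
    (hfree : ∀ (g : G) (x : X), g • x = x → g = 1) :
    ∃ φ : X → G, ∀ (g : G) (x : X), φ (g • x) = g * φ x := by
  let r : X → X := fun x => (Quotient.mk (orbitRel G X) x).out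
  have r_smul (g : G) (x : X) : r (g • x) = r x :=
    congrArg Quotient.out (Quotient.sound (mem_orbit x g))
  have mem_orbit_r (x : X) : ∃ g : G, g • r x = x :=
    mem_orbit_symm.mp (Quotient.mk_out (s := orbitRel G X) x)
  choose φ hφ using mem_orbit_r
  refine ⟨φ, fun g x => ?_⟩
  have e : φ (g • x) • r x = (g * φ x) • r x :=
    calc φ (g • x) • r x = φ (g • x) • r (g • x) := by rw [r_smul]
      _ = g • φ x • r x := by rw [hφ, hφ]
      _ = (g * φ x) • r x := (mul_smul _ _ _).symm
  have h : (g * φ x)⁻¹ * φ (g • x) = 1 := hfree _ (r x) (by rw [mul_smul, e, inv_smul_smul])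
  exact (inv_mul_eq_one.mp h).symm

namespace compGraph

variable {G P : Type*} [Group G] [PartialOrder P] [MulAction G P]

theorem reachable_of_le {p q : P} (h : p ≤ q) : (compGraph P).Reachable p q := by
  rcases eq_or_ne p q with rfl | hne
  · exact .rfl
  · exact SimpleGraph.Adj.reachable ⟨hne, Or.inl h⟩

theorem apply_eq_of_reachable {β : Type*} {f : P → β} (hf : ∀ p q, p ≤ q → f p = f q)
    {p q : P} (h : (compGraph P).Reachable p q) : f p = f q := by
  rw [SimpleGraph.reachable_iff_reflTransGen] at h
  induction h with
  | refl => rfl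
  | tail _ hadj ih => exact ih.trans (hadj.2.elim (hf _ _) fun h => (hf _ _ h).symm)

variable (hmono : ∀ (g : G) (p q : P), p ≤ q → g • p ≤ g • q)
include hmono

def smulHom (g : G) : compGraph P →g compGraph P where
  toFun := (g • ·)
  map_rel' := fun {u v} h =>
    ⟨(MulAction.injective g).ne h.1, h.2.imp (hmono g u v) (hmono g v u)⟩

abbrev componentMulAction : MulAction G (compGraph P).ConnectedComponent where
  smul g c := c.map (smulHom hmono g)
  one_smul c := c.ind fun p => congrArg _ (one_smul G p)
  mul_smul g h c := c.ind fun p => congrArg _ (mul_smul g h p)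

theorem componentMulAction_free
    (H : ∀ (p : P) (g : G), g ≠ 1 → ¬ (compGraph P).Reachable p (g • p)) :
    letI := componentMulAction hmono
    ∀ (g : G) (c : (compGraph P).ConnectedComponent), g • c = c → g = 1 := by
  intro g c
  refine c.ind fun p hp => ?_
  by_contra hg
  exact H p g hg (SimpleGraph.ConnectedComponent.eq.mp hp).symm

end compGraph

theorem IsGMapToQ.apply_eq_of_le {G P : Type*} [Group G] [PartialOrder P] [MulAction G P]
    {f : P → G × Fin 1} (hf : IsGMapToQ G 0 f) {p q : P} (h : p ≤ q) : f p = f q :=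
  (hf.1 p q h).resolve_right (by simp [Subsingleton.elim (f p).2 (f q).2])

theorem stmt0_general {G : Type*} [Group G]
    {P : Type*} [PartialOrder P] [MulAction G P]
    (hmono : ∀ (g : G) (p q : P), p ≤ q → g • p ≤ g • q) :
    (∃ f : P → G × Fin 1, IsGMapToQ G 0 f) ↔
      ∀ (p : P) (g : G), g ≠ 1 → ¬ (compGraph P).Reachable p (g • p) := by
  constructor
  · rintro ⟨f, hf⟩ p g hg hreach
    have h : f p = f (g • p) :=
      compGraph.apply_eq_of_reachable (fun _ _ => hf.apply_eq_of_le) hreach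
    rw [hf.2 g p] at h
    exact hg (mul_eq_right.mp (congrArg Prod.fst h).symm)
  · intro H
    let := compGraph.componentMulAction hmono
    obtain ⟨φ, hφ⟩ := MulAction.exists_equivariant_to_group_of_free
      (compGraph.componentMulAction_free hmono H)
    refine ⟨fun p => (φ ((compGraph P).connectedComponentMk p), 0),
      fun p q hpq => ?_, fun g p => ?_⟩
    · left
      dsimp only
      rw [SimpleGraph.ConnectedComponent.sound (compGraph.reachable_of_le hpq)]
    · exact Prod.ext (hφ g ((compGraph P).connectedComponentMk p)) rfl

theorem stmt0 {G : Type*} [Group G] [Finite G] [Nontrivial G]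
    {P : Type*} [PartialOrder P] [Finite P] [MulAction G P]
    (hmono : ∀ (g : G) (p q : P), p ≤ q → g • p ≤ g • q)
    (hfree : ∀ (g : G) (p : P), g • p = p → g = 1) :
    (∃ f : P → G × Fin 1, IsGMapToQ G 0 f) ↔
      ∀ (p : P) (g : G), g ≠ 1 → ¬ (compGraph P).Reachable p (g • p) :=
  stmt0_general hmono
end

section
/- Let G be a finite group admitting two nontrivial subgroups H₁, H₂ with trivial intersection H₁ ∩ H₂ = {1} (equivalently, G is not a nice group, i.e., G does not have a unique minimal nontrivial subgroup). Then there exist finite free G-posets P₁ and P₂ such that xind P₁ = xind P₂ = 1 but xind (P₁ × P₂) = 0; that is, there are G-maps P₁ → Q_1 G and P₂ → Q_1 G, there are no G-maps P₁ → Q_0 G or P₂ → Q_0 G, and there is a G-map P₁ × P₂ → Q_0 G. -/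
open scoped Pointwise

namespace Subgroup

variable {G : Type*} [Group G]

lemma ne_bot_of_card_prime {K : Subgroup G} (hK : (Nat.card K).Prime) : K ≠ ⊥ :=
  fun h => hK.ne_one (card_eq_one.2 h)

lemma card_conjAct_smul (a : ConjAct G) (K : Subgroup G) :
    Nat.card (a • K : Subgroup G) = Nat.card K :=
  Nat.card_congr (equivSMul a K).toEquiv.symm

lemma eq_of_card_prime_of_inf_ne_bot {A B : Subgroup G} (hA : (Nat.card A).Prime)
    (hB : (Nat.card B).Prime) (hAB : A ⊓ B ≠ ⊥) : A = B := by
  have inf_eq : ∀ {C D : Subgroup G}, (Nat.card C).Prime → C ⊓ D ≠ ⊥ → C ⊓ D = C := by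
    intro C D hC hCD
    have : Finite C := Nat.finite_of_card_ne_zero hC.ne_zero
    refine eq_of_le_of_card_ge inf_le_left ?_
    rcases (Nat.dvd_prime hC).1 (card_dvd_of_le (inf_le_left : C ⊓ D ≤ C)) with h | h
    · exact absurd (card_eq_one.1 h) hCD
    · exact h.ge
  rw [← inf_eq hA hAB, inf_comm, inf_eq hB (inf_comm A B ▸ hAB)]

lemma exists_le_card_prime [Finite G] {H : Subgroup G} (hH : H ≠ ⊥) :
    ∃ A ≤ H, (Nat.card A).Prime := by
  obtain ⟨p, hp, hdvd⟩ := Nat.exists_prime_and_dvd (mt card_eq_one.1 hH)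
  have := Fact.mk hp
  obtain ⟨x, hx⟩ := exists_prime_orderOf_dvd_card' p hdvd
  exact ⟨zpowers (x : G), zpowers_le.2 x.2, by rwa [Nat.card_zpowers, orderOf_coe, hx]⟩

lemma normal_of_le_center {Z : Subgroup G} (hZ : Z ≤ center G) : Z.Normal :=
  ⟨fun z hz g => by rwa [mem_center_iff.1 (hZ hz) g, mul_inv_cancel_right]⟩

/-- If all subgroups of prime order were conjugate, `G` would be a `p`-group by Cauchy's theorem,
and a subgroup of prime order in its (nontrivial) centre would be the only one. -/
lemma exists_card_prime_not_conj_of_ne [Finite G] {A B : Subgroup G} (hA : (Nat.card A).Prime)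
    (hB : (Nat.card B).Prime) (hAB : A ≠ B) :
    ∃ K₁ K₂ : Subgroup G, (Nat.card K₁).Prime ∧ (Nat.card K₂).Prime ∧
      ∀ c : ConjAct G, c • K₁ ≠ K₂ := by
  by_contra! hconj
  have hcard : ∀ K : Subgroup G, (Nat.card K).Prime → Nat.card K = Nat.card A := by
    intro K hK
    obtain ⟨c, rfl⟩ := hconj A K hA hK
    exact card_conjAct_smul c A
  have : Fact (Nat.card A).Prime := ⟨hA⟩
  have hG : IsPGroup (Nat.card A) G := by
    refine IsPGroup.of_card (Nat.eq_prime_pow_of_unique_prime_dvd Nat.card_pos.ne' ?_)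
    intro q hq hdvd
    have := Fact.mk hq
    obtain ⟨K, hK⟩ := Sylow.exists_subgroup_card_pow_prime q (n := 1) (by rwa [pow_one])
    rw [pow_one] at hK
    exact hK ▸ hcard K (hK ▸ hq)
  obtain ⟨x, -, hx⟩ := (bot_or_exists_ne_one A).resolve_left (ne_bot_of_card_prime hA)
  have : Nontrivial G := nontrivial_of_ne x 1 hx
  have := hG.center_nontrivial
  obtain ⟨Z, hZ, hZp⟩ := exists_le_card_prime ((nontrivial_iff_ne_bot _).1 this)
  have hZnormal := normal_of_le_center hZ
  have eq_Z : ∀ K : Subgroup G, (Nat.card K).Prime → K = Z := by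
    intro K hK
    obtain ⟨c, rfl⟩ := hconj Z K hZp hK
    exact hZnormal.conjAct c
  exact hAB ((eq_Z A hA).trans (eq_Z B hB).symm)

theorem exists_forall_smul_inf_smul_eq_bot [Finite G] {H₁ H₂ : Subgroup G} (h₁ : H₁ ≠ ⊥)
    (h₂ : H₂ ≠ ⊥) (h₁₂ : H₁ ⊓ H₂ = ⊥) :
    ∃ K₁ K₂ : Subgroup G, K₁ ≠ ⊥ ∧ K₂ ≠ ⊥ ∧ ∀ a b : ConjAct G, a • K₁ ⊓ b • K₂ = ⊥ := by
  obtain ⟨A, hAH, hA⟩ := exists_le_card_prime h₁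
  obtain ⟨B, hBH, hB⟩ := exists_le_card_prime h₂
  have hAB : A ≠ B := by
    rintro rfl
    exact ne_bot_of_card_prime hA (le_bot_iff.1 (h₁₂ ▸ le_inf hAH hBH))
  obtain ⟨K₁, K₂, hK₁, hK₂, hK⟩ := exists_card_prime_not_conj_of_ne hA hB hAB
  refine ⟨K₁, K₂, ne_bot_of_card_prime hK₁, ne_bot_of_card_prime hK₂, fun a b => ?_⟩
  by_contra hab
  have := eq_of_card_prime_of_inf_ne_bot (card_conjAct_smul a K₁ ▸ hK₁)
    (card_conjAct_smul b K₂ ▸ hK₂) hab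
  exact hK (b⁻¹ * a) (by rw [mul_smul, this, inv_smul_smul])

end Subgroup

lemma QuotientGroup.smul_coe_eq_self_iff {G : Type*} [Group G] {K : Subgroup G} {g a : G} :
    g • (a : G ⧸ K) = a ↔ g ∈ ConjAct.toConjAct a • K := by
  rw [Subgroup.mem_pointwise_smul_iff_inv_smul_mem, ConjAct.smul_def, MulAction.Quotient.smul_mk,
    smul_eq_mul, QuotientGroup.eq, ← inv_mem_iff]
  simp [mul_assoc]

lemma QuotientGroup.isCancelSMul_prod {G : Type*} [Group G] {K₁ K₂ : Subgroup G}
    (h : ∀ a b : ConjAct G, a • K₁ ⊓ b • K₂ = ⊥) : IsCancelSMul G ((G ⧸ K₁) × (G ⧸ K₂)) := by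
  refine isCancelSMul_iff_eq_one_of_smul_eq.2 fun g x hx => ?_
  obtain ⟨x₁, x₂⟩ := x
  induction x₁ using QuotientGroup.induction_on
  induction x₂ using QuotientGroup.induction_on
  rw [Prod.smul_mk, Prod.mk.injEq] at hx
  have hg := Subgroup.mem_inf.2 ⟨smul_coe_eq_self_iff.1 hx.1, smul_coe_eq_self_iff.1 hx.2⟩
  rwa [h, Subgroup.mem_bot] at hg

section FreeAction

variable {G X : Type*} [Group G] [MulAction G X]

-- A free action maps to `G` by sending a chosen representative of each orbit to `1`.
theorem isCancelSMul_iff_nonempty_mulActionHom : IsCancelSMul G X ↔ Nonempty (X →[G] G) := by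
  constructor
  · intro
    let rep : X → X := fun x => (Quotient.mk (MulAction.orbitRel G X) x).out
    have hrep : ∀ x, ∃ g : G, g • rep x = x := fun x => by
      obtain ⟨g, hg⟩ := Quotient.mk_out (s := MulAction.orbitRel G X) x
      exact ⟨g⁻¹, inv_smul_eq_iff.2 hg.symm⟩
    choose φ hφ using hrep
    refine ⟨⟨φ, fun g x => IsCancelSMul.right_cancel _ _ (rep x) ?_⟩⟩
    have hrep_smul : rep (g • x) = rep x :=
      congrArg Quotient.out (Quotient.sound (MulAction.mem_orbit x g))
    rw [id, smul_eq_mul, mul_smul, hφ, ← hrep_smul, hφ]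
  · rintro ⟨φ⟩
    refine isCancelSMul_iff_eq_one_of_smul_eq.2 fun g x hx => ?_
    simpa [map_smul] using congrArg φ hx

end FreeAction

section GMapToQ

variable {G P Z : Type*} [Group G] [PartialOrder P] [MulAction G P]

lemma IsGMapToQ.eq_one_of_le_of_smul_le {f : P → G × Fin 1} (hf : IsGMapToQ G 0 f) {g : G}
    {p q : P} (hp : p ≤ q) (hgp : g • p ≤ q) : g = 1 := by
  have eq_of_le : ∀ {p q : P}, p ≤ q → f p = f q := fun h =>
    (hf.1 _ _ h).resolve_right fun hlt => hlt.ne (Subsingleton.elim (α := Fin 1) _ _)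
  have h := congrArg Prod.fst ((hf.2 g p).symm.trans ((eq_of_le hgp).trans (eq_of_le hp).symm))
  exact mul_eq_right.1 h

lemma exists_isGMapToQ_of_map_eq [MulAction G Z] [IsCancelSMul G Z] (n : ℕ) (ψ : P →[G] Z)
    (hψ : ∀ p q, p ≤ q → ψ p = ψ q) : ∃ f : P → G × Fin (n + 1), IsGMapToQ G n f := by
  obtain ⟨φ⟩ := isCancelSMul_iff_nonempty_mulActionHom.1 ‹IsCancelSMul G Z›
  exact ⟨fun p => (φ (ψ p), 0), fun p q h => .inl (by simp only [hψ p q h]), fun g p => by simp⟩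

end GMapToQ

section

variable {G X Y : Type*} [Group G] [MulAction G X] [MulAction G Y]

-- For `c = cosetMap K` (the projection `G → G ⧸ K`) this is the poset `P_K` of the paper.
def FiberPoset (_c : X →[G] Y) : Type _ := X × Fin 2

namespace FiberPoset

variable {c : X →[G] Y}

instance [Finite X] : Finite (FiberPoset c) := inferInstanceAs (Finite (X × Fin 2))

instance : PartialOrder (FiberPoset c) where
  le p q := p = q ∨ (p.2 < q.2 ∧ c p.1 = c q.1)
  le_refl _ := .inl rfl
  le_trans p q r := by
    rintro (rfl | ⟨hpq, hcpq⟩) (rfl | ⟨hqr, hcqr⟩)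
    exacts [.inl rfl, .inr ⟨hqr, hcqr⟩, .inr ⟨hpq, hcpq⟩, .inr ⟨hpq.trans hqr, hcpq.trans hcqr⟩]
  le_antisymm p q := by
    rintro (rfl | ⟨hpq, -⟩) (h | ⟨hqp, -⟩)
    exacts [rfl, rfl, h.symm, absurd hpq hqp.asymm]

instance : MulAction G (FiberPoset c) where
  smul g p := (g • p.1, p.2)
  one_smul p := Prod.ext (one_smul G p.1) rfl
  mul_smul g h p := Prod.ext (mul_smul g h p.1) rfl

lemma smul_def (g : G) (p : FiberPoset c) : g • p = (g • p.1, p.2) := rfl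

lemma smul_le_smul {p q : FiberPoset c} (h : p ≤ q) (g : G) : g • p ≤ g • q := by
  rcases h with rfl | ⟨hlt, hc⟩
  · exact le_rfl
  · exact .inr ⟨hlt, by simp only [smul_def, map_smul, hc]⟩

instance [IsCancelSMul G X] : IsCancelSMul G (FiberPoset c) where
  right_cancel' a b p h := IsCancelSMul.right_cancel a b p.1 (congrArg Prod.fst h)

def proj (c : X →[G] Y) : FiberPoset c →[G] Y where
  toFun p := c p.1
  map_smul' g p := map_smul c g p.1

lemma proj_eq_of_le {p q : FiberPoset c} (h : p ≤ q) : proj c p = proj c q := by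
  rcases h with rfl | ⟨-, hc⟩
  exacts [rfl, hc]

lemma isGMapToQ_one (φ : X →[G] G) : IsGMapToQ G 1 (fun p : FiberPoset c => (φ p.1, p.2)) := by
  refine ⟨fun p q h => ?_, fun g p => by simp [smul_def]⟩
  rcases h with rfl | ⟨hlt, -⟩
  exacts [.inl rfl, .inr hlt]

lemma not_exists_isGMapToQ_zero {g : G} (hg : g ≠ 1) {x : X} (hx : c (g • x) = c x) :
    ¬ ∃ f : FiberPoset c → G × Fin 1, IsGMapToQ G 0 f := by
  rintro ⟨f, hf⟩
  exact hg (hf.eq_one_of_le_of_smul_le (p := (x, 0)) (q := (x, 1)) (.inr ⟨Fin.zero_lt_one, rfl⟩)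
    (.inr ⟨Fin.zero_lt_one, hx⟩))

end FiberPoset

end

universe v

noncomputable section

variable {G : Type*} [Group G] [Small.{v} G]

-- `Shrink` moves `G` into universe `v`: the posets of the theorem have to live in `Type`.
variable (G) in
@[simps]
def shrinkMulActionHom : Shrink.{v} G →[G] G where
  toFun := (equivShrink G).symm
  map_smul' := equivShrink_symm_smul

instance : IsCancelSMul G (Shrink.{v} G) :=
  isCancelSMul_iff_nonempty_mulActionHom.2 ⟨shrinkMulActionHom G⟩

def cosetMap (K : Subgroup G) : Shrink.{v} G →[G] G ⧸ K :=
  (MulActionHom.toQuotient K).comp (shrinkMulActionHom G)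

lemma FiberPoset.not_exists_isGMapToQ_zero_cosetMap {K : Subgroup G} (hK : K ≠ ⊥) :
    ¬ ∃ f : FiberPoset (cosetMap.{v} K) → G × Fin 1, IsGMapToQ G 0 f := by
  obtain ⟨k, hk, hk1⟩ := (Subgroup.bot_or_exists_ne_one K).resolve_left hK
  refine not_exists_isGMapToQ_zero hk1 (x := equivShrink G 1) ?_
  simp [cosetMap, MulActionHom.toQuotient_apply, QuotientGroup.eq, hk]

end

/-- If a finite group `G` has two nontrivial subgroups with trivial intersection
(equivalently, `G` is not a "nice" group), then there are finite free `G`-posets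
`P₁, P₂` with `xind P₁ = xind P₂ = 1` but `xind (P₁ × P₂) = 0`. -/
theorem stmt2 {G : Type*} [Group G] [Finite G]
    (H₁ H₂ : Subgroup G) (h1 : H₁ ≠ ⊥) (h2 : H₂ ≠ ⊥) (h12 : H₁ ⊓ H₂ = ⊥) :
    ∃ (P₁ P₂ : Type) (_ : PartialOrder P₁) (_ : PartialOrder P₂)
      (_ : MulAction G P₁) (_ : MulAction G P₂) (_ : Finite P₁) (_ : Finite P₂),
      (∀ (g : G) (p q : P₁), p ≤ q → g • p ≤ g • q) ∧
      (∀ (g : G) (p q : P₂), p ≤ q → g • p ≤ g • q) ∧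
      (∀ (g : G) (p : P₁), g • p = p → g = 1) ∧
      (∀ (g : G) (p : P₂), g • p = p → g = 1) ∧
      (∃ f : P₁ → G × Fin 2, IsGMapToQ G 1 f) ∧
      (¬ ∃ f : P₁ → G × Fin 1, IsGMapToQ G 0 f) ∧
      (∃ f : P₂ → G × Fin 2, IsGMapToQ G 1 f) ∧
      (¬ ∃ f : P₂ → G × Fin 1, IsGMapToQ G 0 f) ∧
      (∃ f : P₁ × P₂ → G × Fin 1, IsGMapToQ G 0 f) := by
  obtain ⟨K₁, K₂, hK₁, hK₂, hK⟩ := Subgroup.exists_forall_smul_inf_smul_eq_bot h1 h2 h12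
  have := QuotientGroup.isCancelSMul_prod hK
  refine ⟨FiberPoset (cosetMap.{0} K₁), FiberPoset (cosetMap.{0} K₂), inferInstance,
    inferInstance, inferInstance, inferInstance, inferInstance, inferInstance,
    fun g p q h => FiberPoset.smul_le_smul h g, fun g p q h => FiberPoset.smul_le_smul h g,
    fun g p => IsCancelSMul.eq_one_of_smul, fun g p => IsCancelSMul.eq_one_of_smul,
    ⟨_, FiberPoset.isGMapToQ_one (shrinkMulActionHom.{0} G)⟩,
    FiberPoset.not_exists_isGMapToQ_zero_cosetMap hK₁,
    ⟨_, FiberPoset.isGMapToQ_one (shrinkMulActionHom.{0} G)⟩,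
    FiberPoset.not_exists_isGMapToQ_zero_cosetMap hK₂, ?_⟩
  exact exists_isGMapToQ_of_map_eq 0 ((FiberPoset.proj _).prodMap (FiberPoset.proj _))
    fun p q h => Prod.ext (FiberPoset.proj_eq_of_le h.1) (FiberPoset.proj_eq_of_le h.2)
end

section
/- Let G be a finite group and let h ∈ G with h ≠ 1. Let P_h be the G-poset on two disjoint copies G⁽¹⁾, G⁽²⁾ of G, with action g•x⁽ⁱ⁾ = (gx)⁽ⁱ⁾ for i = 1,2, and with the partial order whose only strict relations are g⁽¹⁾ < g⁽²⁾ and g⁽¹⁾ < (gh)⁽²⁾ for all g ∈ G. Then P_h is a finite free G-poset with xind P_h = 1: there exists a G-map P_h → Q_1 G (namely g⁽ⁱ⁾ ↦ (g, i−1)), but there is no G-map P_h → Q_0 G. -/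
/-- The ground set of the `G`-poset `P_h`: two copies of `G`, the copy of `g` in the first
(resp. second) copy being `(g, false)` (resp. `(g, true)`). -/
def Ph (G : Type*) (h : G) : Type _ := G × Bool

/-- The order on `P_h`: the only strict relations are `g⁽¹⁾ < g⁽²⁾` and `g⁽¹⁾ < (g h)⁽²⁾`. -/
instance Ph.instPartialOrder (G : Type*) [Group G] (h : G) : PartialOrder (Ph G h) where
  le x y := x = y ∨ (x.2 = false ∧ y.2 = true ∧ (y.1 = x.1 ∨ y.1 = x.1 * h))
  le_refl x := Or.inl rfl
  le_trans := by
    rintro x y z (rfl | ⟨hx, hy, hr⟩) hyz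
    · exact hyz
    · rcases hyz with rfl | ⟨hy', _, _⟩
      · exact Or.inr ⟨hx, hy, hr⟩
      · rw [hy] at hy'; simp at hy'
  le_antisymm := by
    rintro x y (rfl | ⟨hx, hy, _⟩) hyx
    · rfl
    · rcases hyx with h' | ⟨hy', _, _⟩
      · exact h'.symm
      · rw [hy] at hy'; simp at hy'

/-- The `G`-action on `P_h`: `g • x⁽ⁱ⁾ = (g x)⁽ⁱ⁾`. -/
instance Ph.instSMul (G : Type*) [Group G] (h : G) : SMul G (Ph G h) :=
  ⟨fun g x => (g * x.1, x.2)⟩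

instance Ph.instMulAction (G : Type*) [Group G] (h : G) : MulAction G (Ph G h) where
  one_smul x := by
    show ((1 : G) * x.1, x.2) = x
    simp only [one_mul]
    rfl
  mul_smul g₁ g₂ x := by
    show (g₁ * g₂ * x.1, x.2) = (g₁ * (g₂ * x.1), x.2)
    rw [mul_assoc]

/-! `g⁽ⁱ⁾ ↦ (g, i - 1)` is a `G`-map `P_h → Q_1 G`. A `G`-map `f : P_h → Q_0 G`
is constant on comparable pairs, since `Q_0 G` is an antichain; as `1⁽¹⁾` lies below both `1⁽²⁾`
and `h⁽²⁾ = h • 1⁽²⁾`, this gives `f (h • 1⁽²⁾) = f 1⁽²⁾`, and freeness of `Q_0 G` forces `h = 1`. -/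

namespace IsGMapToQ

variable {G P : Type*} [Group G] [PartialOrder P] [MulAction G P]

theorem eq_one_of_map_smul_eq {n : ℕ} {f : P → G × Fin (n + 1)} (hf : IsGMapToQ G n f)
    {g : G} {p : P} (hp : f (g • p) = f p) : g = 1 := by
  have hfst : g * (f p).1 = (f p).1 := congrArg Prod.fst ((hf.2 g p).symm.trans hp)
  simpa using hfst

theorem map_eq_of_le {f : P → G × Fin 1} (hf : IsGMapToQ G 0 f) {p q : P} (hpq : p ≤ q) :
    f p = f q :=
  (hf.1 p q hpq).resolve_right fun hlt => hlt.ne (Fin.subsingleton_one.elim _ _)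

end IsGMapToQ

namespace Ph

variable {G : Type*} [Group G] {h : G}

theorem le_def {x y : Ph G h} :
    x ≤ y ↔ x = y ∨ (x.2 = false ∧ y.2 = true ∧ (y.1 = x.1 ∨ y.1 = x.1 * h)) :=
  Iff.rfl

theorem smul_def (g : G) (x : Ph G h) : g • x = ((g * x.1, x.2) : G × Bool) :=
  rfl

instance [Finite G] : Finite (Ph G h) :=
  inferInstanceAs (Finite (G × Bool))

theorem smul_le_smul (g : G) {p q : Ph G h} (hpq : p ≤ q) : g • p ≤ g • q := by
  rcases le_def.1 hpq with rfl | ⟨hp, hq, hqp⟩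
  · exact le_rfl
  · refine le_def.2 (Or.inr ⟨hp, hq, ?_⟩)
    simp only [smul_def, hqp, mul_assoc, mul_right_inj]

theorem eq_one_of_smul_eq {g : G} {p : Ph G h} (hp : g • p = p) : g = 1 := by
  have hfst : g * p.1 = p.1 := congrArg Prod.fst hp
  simpa using hfst

def toQ₁ (x : Ph G h) : G × Fin 2 :=
  (x.1, if x.2 then 1 else 0)

theorem isGMapToQ_toQ₁ : IsGMapToQ G 1 (toQ₁ (h := h)) := by
  refine ⟨fun p q hpq => ?_, fun _ _ => rfl⟩
  rcases le_def.1 hpq with rfl | ⟨hp, hq, -⟩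
  · exact Or.inl rfl
  · right
    simp [toQ₁, hp, hq]

theorem not_exists_isGMapToQ_zero (hh : h ≠ 1) :
    ¬ ∃ f : Ph G h → G × Fin 1, IsGMapToQ G 0 f := by
  rintro ⟨f, hf⟩
  let bot : Ph G h := ((1 : G), false)
  let top : Ph G h := ((1 : G), true)
  have htop : bot ≤ top := le_def.2 (Or.inr ⟨rfl, rfl, Or.inl rfl⟩)
  have hhtop : bot ≤ h • top :=
    le_def.2 (Or.inr ⟨rfl, rfl, Or.inr ((mul_one h).trans (one_mul h).symm)⟩)
  exact hh (hf.eq_one_of_map_smul_eq ((hf.map_eq_of_le hhtop).symm.trans (hf.map_eq_of_le htop)))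

end Ph

/-- `P_h` is a finite free `G`-poset with `xind P_h = 1`. -/
theorem stmt3 {G : Type*} [Group G] [Finite G] (h : G) (hh : h ≠ 1) :
    Finite (Ph G h) ∧
    (∀ (g : G) (p q : Ph G h), p ≤ q → g • p ≤ g • q) ∧
    (∀ (g : G) (p : Ph G h), g • p = p → g = 1) ∧
    (∃ f : Ph G h → G × Fin 2, IsGMapToQ G 1 f) ∧
    ¬ ∃ f : Ph G h → G × Fin 1, IsGMapToQ G 0 f :=
  ⟨inferInstance, fun g _ _ => Ph.smul_le_smul g, fun _ _ => Ph.eq_one_of_smul_eq,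
    ⟨Ph.toQ₁, Ph.isGMapToQ_toQ₁⟩, Ph.not_exists_isGMapToQ_zero hh⟩
end

section
/- Let G be a finite group in which any two nontrivial cyclic subgroups intersect nontrivially, i.e., for all g, h ∈ G with g ≠ 1 and h ≠ 1 the subgroups ⟨g⟩ and ⟨h⟩ share a non-identity element (this holds exactly when G is a nice group). If P and Q are finite free G-posets with xind P = 1 and xind Q = 1, then xind (P × Q) = 1. -/
/-!
A `G`-map to `Q_0 G` is an equivariant map to `G` that is constant on the connected components
of the comparability graph, so one exists iff no `g ≠ 1` maps a point into its own component.
If `xind P ≠ 0` and `xind Q ≠ 0`, some `g ≠ 1` does this in `P` and some `h ≠ 1` in `Q`. The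
elements mapping a point into its own component form a subgroup, so a common nontrivial power `k`
of `g` and `h` does it in both, hence maps some `(p, q)` into its own component of `P × Q`.
Projecting onto `P` gives `xind (P × Q) ≤ 1`.
-/

theorem Relation.EqvGen.map {α β : Type*} {r : α → α → Prop} {s : β → β → Prop} (f : α → β)
    (hf : ∀ a b, r a b → s (f a) (f b)) {a b : α} (h : EqvGen r a b) :
    EqvGen s (f a) (f b) := by
  induction h with
  | rel a b hab => exact .rel _ _ (hf a b hab)
  | refl a => exact .refl _
  | symm a b _ ih => exact .symm _ _ ih
  | trans a b c _ _ ihab ihbc => exact .trans _ _ _ ihab ihbc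

def SameComponent {P : Type*} [LE P] (p q : P) : Prop :=
  Relation.EqvGen (· ≤ ·) p q

namespace SameComponent

variable {G : Type*} [Group G] {P : Type*} [LE P] [MulAction G P] {p q r : P}

theorem refl (p : P) : SameComponent p p := Relation.EqvGen.refl p

theorem of_le (h : p ≤ q) : SameComponent p q := Relation.EqvGen.rel _ _ h

theorem symm (h : SameComponent p q) : SameComponent q p := Relation.EqvGen.symm _ _ h

theorem trans (hpq : SameComponent p q) (hqr : SameComponent q r) : SameComponent p r :=
  Relation.EqvGen.trans _ _ _ hpq hqr

theorem smul (hmono : ∀ (g : G) (p q : P), p ≤ q → g • p ≤ g • q) (g : G)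
    (h : SameComponent p q) : SameComponent (g • p) (g • q) :=
  h.map (g • ·) (hmono g)

end SameComponent

theorem SameComponent.prodMk {P Q : Type*} [Preorder P] [Preorder Q] {p p' : P} {q q' : Q}
    (hp : SameComponent p p') (hq : SameComponent q q') :
    SameComponent (p, q) (p', q') :=
  SameComponent.trans (hp.map (·, q) fun _ _ h => ⟨h, le_rfl⟩)
    (hq.map (p', ·) fun _ _ h => ⟨le_rfl, h⟩)

section ComponentStabilizer

variable {G : Type*} [Group G] {P : Type*} [LE P] [MulAction G P]

def componentStabilizer (hmono : ∀ (g : G) (p q : P), p ≤ q → g • p ≤ g • q) (p : P) :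
    Subgroup G where
  carrier := {g | SameComponent p (g • p)}
  one_mem' := by simpa using SameComponent.refl p
  mul_mem' {a b} ha hb := ha.trans (by simpa [mul_smul] using hb.smul hmono a)
  inv_mem' {a} ha := by simpa using (ha.smul hmono a⁻¹).symm

theorem SameComponent.smul_of_mem_zpowers
    (hmono : ∀ (g : G) (p q : P), p ≤ q → g • p ≤ g • q) {p : P} {g k : G}
    (h : SameComponent p (g • p)) (hk : k ∈ Subgroup.zpowers g) : SameComponent p (k • p) :=
  (Subgroup.zpowers_le (H := componentStabilizer hmono p)).mpr h hk

end ComponentStabilizer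

section GMapToQZero

variable {G : Type*} [Group G] {P : Type*} [MulAction G P]

theorem exists_equivariant_const_on_components [LE P]
    (hmono : ∀ (g : G) (p q : P), p ≤ q → g • p ≤ g • q)
    (hfree : ∀ (g : G) (p : P), SameComponent p (g • p) → g = 1) :
    ∃ φ : P → G, (∀ p q : P, SameComponent p q → φ p = φ q) ∧
      ∀ (g : G) (p : P), φ (g • p) = g * φ p := by
  have unique {p r : P} {g₁ g₂ : G} (h₁ : SameComponent p (g₁ • r))
      (h₂ : SameComponent p (g₂ • r)) : g₁ = g₂ := by
    have h := (h₁.symm.trans h₂).smul hmono g₁⁻¹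
    rw [inv_smul_smul, smul_smul] at h
    exact inv_mul_eq_one.mp (hfree _ _ h)
  -- `φ p` is the translation carrying a chosen representative of the `G`-orbit of the
  -- component of `p` into that component.
  let s : Setoid P :=
    { r := fun p q => ∃ g : G, SameComponent p (g • q)
      iseqv :=
        { refl := fun p => ⟨1, by simpa using SameComponent.refl p⟩
          symm := fun {p q} ⟨g, h⟩ => ⟨g⁻¹, by simpa using (h.smul hmono g⁻¹).symm⟩
          trans := fun {p q r} ⟨g, hpq⟩ ⟨g', hqr⟩ =>
            ⟨g * g', hpq.trans (by simpa [mul_smul] using hqr.smul hmono g)⟩ } }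
  have toRep (p : P) : ∃ g : G, SameComponent p (g • (⟦p⟧ : Quotient s).out) :=
    Setoid.symm (Quotient.mk_out p)
  choose φ hφ using toRep
  refine ⟨φ, fun p q hpq => ?_, fun g p => ?_⟩
  · have hclass : (⟦p⟧ : Quotient s) = ⟦q⟧ := Quotient.sound ⟨1, by simpa using hpq⟩
    exact unique (hφ p) (hclass ▸ hpq.trans (hφ q))
  · have hclass : (⟦g • p⟧ : Quotient s) = ⟦p⟧ := Quotient.sound ⟨g, SameComponent.refl _⟩
    refine unique (hφ (g • p)) ?_
    rw [hclass, mul_smul]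
    exact (hφ p).smul hmono g

variable [PartialOrder P]

theorem IsGMapToQ.eq_of_sameComponent {f : P → G × Fin 1} (hf : IsGMapToQ G 0 f) {p q : P}
    (h : SameComponent p q) : f p = f q := by
  refine (Equivalence.eqvGen_iff eq_equivalence).mp (h.map f fun a b hab => ?_)
  rcases hf.1 a b hab with heq | hlt
  · exact heq
  · exact absurd hlt (Subsingleton.elim (f a).2 (f b).2 ▸ lt_irrefl _)

theorem IsGMapToQ.eq_one_of_sameComponent_smul {f : P → G × Fin 1} (hf : IsGMapToQ G 0 f)
    {g : G} {p : P} (h : SameComponent p (g • p)) : g = 1 := by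
  have := hf.eq_of_sameComponent h
  rw [hf.2] at this
  exact mul_eq_right.mp (congrArg Prod.fst this).symm

theorem exists_isGMapToQ_zero_iff (hmono : ∀ (g : G) (p q : P), p ≤ q → g • p ≤ g • q) :
    (∃ f : P → G × Fin 1, IsGMapToQ G 0 f) ↔
      ∀ (g : G) (p : P), SameComponent p (g • p) → g = 1 := by
  refine ⟨fun ⟨f, hf⟩ _ _ h => hf.eq_one_of_sameComponent_smul h, fun hfree => ?_⟩
  obtain ⟨φ, hconst, hequiv⟩ := exists_equivariant_const_on_components hmono hfree
  exact ⟨fun p => (φ p, 0), fun p q hpq => .inl (Prod.ext (hconst p q (.of_le hpq)) rfl),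
    fun g p => Prod.ext (hequiv g p) rfl⟩

theorem IsGMapToQ.comp_fst {Q : Type*} [PartialOrder Q] [MulAction G Q] {n : ℕ}
    {f : P → G × Fin (n + 1)} (hf : IsGMapToQ G n f) :
    IsGMapToQ G n (f ∘ Prod.fst : P × Q → G × Fin (n + 1)) :=
  ⟨fun x y hxy => hf.1 x.1 y.1 hxy.1, fun g x => hf.2 g x.1⟩

end GMapToQZero

theorem stmt6_general {G : Type*} [Group G]
    (hnice : ∀ g h : G, g ≠ 1 → h ≠ 1 →
      ∃ k : G, k ≠ 1 ∧ k ∈ Subgroup.zpowers g ∧ k ∈ Subgroup.zpowers h)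
    {P Q : Type*} [PartialOrder P] [PartialOrder Q]
    [MulAction G P] [MulAction G Q]
    (hmonoP : ∀ (g : G) (p q : P), p ≤ q → g • p ≤ g • q)
    (hmonoQ : ∀ (g : G) (p q : Q), p ≤ q → g • p ≤ g • q)
    (hP1 : ∃ f : P → G × Fin 2, IsGMapToQ G 1 f)
    (hP0 : ¬ ∃ f : P → G × Fin 1, IsGMapToQ G 0 f)
    (hQ0 : ¬ ∃ f : Q → G × Fin 1, IsGMapToQ G 0 f) :
    (∃ f : P × Q → G × Fin 2, IsGMapToQ G 1 f) ∧
    ¬ ∃ f : P × Q → G × Fin 1, IsGMapToQ G 0 f := by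
  refine ⟨?_, fun ⟨f, hf⟩ => ?_⟩
  · obtain ⟨f, hf⟩ := hP1
    exact ⟨_, hf.comp_fst⟩
  rw [exists_isGMapToQ_zero_iff hmonoP] at hP0
  rw [exists_isGMapToQ_zero_iff hmonoQ] at hQ0
  push Not at hP0 hQ0
  obtain ⟨g, p, hgp, hg⟩ := hP0
  obtain ⟨h, q, hhq, hh⟩ := hQ0
  obtain ⟨k, hk, hkg, hkh⟩ := hnice g h hg hh
  have hkpq : SameComponent (p, q) (k • (p, q)) :=
    (hgp.smul_of_mem_zpowers hmonoP hkg).prodMk (hhq.smul_of_mem_zpowers hmonoQ hkh)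
  exact hk (hf.eq_one_of_sameComponent_smul hkpq)

/-- If in `G` any two nontrivial cyclic subgroups intersect nontrivially (i.e. `G` is a "nice"
group), and `P, Q` are finite free `G`-posets with `xind P = xind Q = 1`, then
`xind (P × Q) = 1` (componentwise order, diagonal action on the product). -/
theorem stmt6 {G : Type*} [Group G] [Finite G]
    (hnice : ∀ g h : G, g ≠ 1 → h ≠ 1 →
      ∃ k : G, k ≠ 1 ∧ k ∈ Subgroup.zpowers g ∧ k ∈ Subgroup.zpowers h)
    {P Q : Type*} [PartialOrder P] [PartialOrder Q] [Finite P] [Finite Q]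
    [MulAction G P] [MulAction G Q]
    (hmonoP : ∀ (g : G) (p q : P), p ≤ q → g • p ≤ g • q)
    (hmonoQ : ∀ (g : G) (p q : Q), p ≤ q → g • p ≤ g • q)
    (hfreeP : ∀ (g : G) (p : P), g • p = p → g = 1)
    (hfreeQ : ∀ (g : G) (q : Q), g • q = q → g = 1)
    (hP1 : ∃ f : P → G × Fin 2, IsGMapToQ G 1 f)
    (hP0 : ¬ ∃ f : P → G × Fin 1, IsGMapToQ G 0 f)
    (hQ1 : ∃ f : Q → G × Fin 2, IsGMapToQ G 1 f)
    (hQ0 : ¬ ∃ f : Q → G × Fin 1, IsGMapToQ G 0 f) :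
    (∃ f : P × Q → G × Fin 2, IsGMapToQ G 1 f) ∧
    ¬ ∃ f : P × Q → G × Fin 1, IsGMapToQ G 0 f :=
  stmt6_general hnice hmonoP hmonoQ hP1 hP0 hQ0
end

section
/- Let G be a finite group in which any two nontrivial cyclic subgroups intersect nontrivially, i.e., for all g, h ∈ G with g ≠ 1 and h ≠ 1 the subgroups ⟨g⟩ and ⟨h⟩ share a non-identity element. If P and Q are finite free G-posets admitting no G-map to Q_0 G (i.e., xind P ≥ 1 and xind Q ≥ 1), then the product G-poset P × Q admits no G-map to Q_0 G (i.e., xind (P × Q) ≥ 1). -/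
open Relation

section Aux

variable {G : Type*} [Group G] {P : Type*} [PartialOrder P] [MulAction G P]

private lemma eqvgen_smul_aux (hmono : ∀ (g : G) (p q : P), p ≤ q → g • p ≤ g • q)
    (g : G) {a b : P} (h : EqvGen (· ≤ ·) a b) :
    EqvGen (· ≤ ·) (g • a) (g • b) := by
  induction h with
  | rel x y h => exact EqvGen.rel _ _ (hmono g _ _ h)
  | refl x => exact EqvGen.refl _
  | symm x y _ ih => exact EqvGen.symm _ _ ih
  | trans x y z _ _ ih1 ih2 => exact EqvGen.trans _ _ _ ih1 ih2

private lemma zpowers_eqvgen_aux (hmono : ∀ (g : G) (p q : P), p ≤ q → g • p ≤ g • q)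
    {g : G} {p : P} (h : EqvGen (· ≤ ·) p (g • p)) {k : G}
    (hk : k ∈ Subgroup.zpowers g) : EqvGen (· ≤ ·) p (k • p) := by
  let S : Subgroup G :=
    { carrier := {a | EqvGen (· ≤ ·) p (a • p)}
      one_mem' := by simpa using EqvGen.refl p
      mul_mem' := by
        intro a b ha hb
        have h2 : EqvGen (· ≤ ·) (a • p) ((a * b) • p) := by
          simpa [mul_smul] using eqvgen_smul_aux hmono a hb
        exact EqvGen.trans _ _ _ ha h2
      inv_mem' := by
        intro a ha
        have h2 : EqvGen (· ≤ ·) (a⁻¹ • p) p := by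
          simpa [smul_smul] using eqvgen_smul_aux hmono a⁻¹ ha
        exact EqvGen.symm _ _ h2 }
  exact Subgroup.zpowers_le.mpr (show g ∈ S from h) hk

private lemma exists_map_aux (hmono : ∀ (g : G) (p q : P), p ≤ q → g • p ≤ g • q)
    (hfree : ∀ (g : G) (p : P), EqvGen (· ≤ ·) p (g • p) → g = 1) :
    ∃ f : P → G × Fin 1, IsGMapToQ G 0 f := by
  classical
  have huniq : ∀ (r p : P) (g g' : G), EqvGen (· ≤ ·) (g • r) p →
      EqvGen (· ≤ ·) (g' • r) p → g = g' := by
    intro r p g g' h1 h2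
    have h3 : EqvGen (· ≤ ·) (g • r) (g' • r) := EqvGen.trans _ _ _ h1 (EqvGen.symm _ _ h2)
    have h4 : EqvGen (· ≤ ·) r ((g⁻¹ * g') • r) := by
      simpa [smul_smul] using eqvgen_smul_aux hmono g⁻¹ h3
    have := hfree _ _ h4
    have : g' = g * 1 := by rw [← this]; group
    simp [this]
  let s : Setoid P :=
    ⟨fun p q => ∃ g : G, EqvGen (· ≤ ·) (g • p) q, by
      constructor
      · intro p; exact ⟨1, by simpa using EqvGen.refl p⟩
      · rintro p q ⟨g, hg⟩
        refine ⟨g⁻¹, ?_⟩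
        have := eqvgen_smul_aux hmono g⁻¹ hg
        simpa [smul_smul] using EqvGen.symm _ _ this
      · rintro p q r ⟨g, hg⟩ ⟨h, hh⟩
        refine ⟨h * g, ?_⟩
        have := eqvgen_smul_aux hmono h hg
        rw [mul_smul]
        exact EqvGen.trans _ _ _ this hh⟩
  let rep : P → P := fun p => (Quotient.mk s p).out
  have hrep : ∀ p : P, ∃ g : G, EqvGen (· ≤ ·) (g • rep p) p := fun p =>
    (Quotient.mk_out (s := s) p : s.r _ _)
  have hrep_eq : ∀ p q : P, s.r p q → rep p = rep q := by
    intro p q h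
    simp only [rep, Quotient.sound h]
  let φ : P → G := fun p => (hrep p).choose
  have hφ : ∀ p : P, EqvGen (· ≤ ·) (φ p • rep p) p := fun p => (hrep p).choose_spec
  refine ⟨fun p => (φ p, 0), ?_, ?_⟩
  · intro p q hpq
    left
    have hs : s.r p q := ⟨1, by simpa using EqvGen.rel p q hpq⟩
    have he : rep p = rep q := hrep_eq p q hs
    have h1 : EqvGen (· ≤ ·) (φ p • rep q) q := by
      rw [← he]; exact EqvGen.trans _ _ _ (hφ p) (EqvGen.rel p q hpq)
    have := huniq (rep q) q (φ p) (φ q) h1 (hφ q)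
    simp [this]
  · intro g p
    have hs : s.r (g • p) p := ⟨g⁻¹, by simpa [smul_smul] using EqvGen.refl p⟩
    have he : rep (g • p) = rep p := hrep_eq _ _ hs
    have h1 : EqvGen (· ≤ ·) ((g * φ p) • rep (g • p)) (g • p) := by
      rw [he, mul_smul]
      exact eqvgen_smul_aux hmono g (hφ p)
    have := huniq (rep (g • p)) (g • p) (φ (g • p)) (g * φ p) (hφ (g • p)) h1
    simp [this]

end Aux

private lemma eqvgen_prod_fst {P Q : Type*} [PartialOrder P] [PartialOrder Q]
    {a b : P} (q : Q) (h : EqvGen (· ≤ ·) a b) :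
    EqvGen (fun x y : P × Q => x ≤ y) (a, q) (b, q) := by
  induction h with
  | rel x y h => exact EqvGen.rel _ _ ⟨h, le_refl q⟩
  | refl x => exact EqvGen.refl _
  | symm x y _ ih => exact EqvGen.symm _ _ ih
  | trans x y z _ _ ih1 ih2 => exact EqvGen.trans _ _ _ ih1 ih2

private lemma eqvgen_prod_snd {P Q : Type*} [PartialOrder P] [PartialOrder Q]
    (p : P) {a b : Q} (h : EqvGen (· ≤ ·) a b) :
    EqvGen (fun x y : P × Q => x ≤ y) (p, a) (p, b) := by
  induction h with
  | rel x y h => exact EqvGen.rel _ _ ⟨le_refl p, h⟩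
  | refl x => exact EqvGen.refl _
  | symm x y _ ih => exact EqvGen.symm _ _ ih
  | trans x y z _ _ ih1 ih2 => exact EqvGen.trans _ _ _ ih1 ih2

/-- If in `G` any two nontrivial cyclic subgroups intersect nontrivially, and `P, Q` are finite
free `G`-posets admitting no `G`-map to `Q_0 G`, then the product `G`-poset `P × Q`
(componentwise order, diagonal action) admits no `G`-map to `Q_0 G`. -/
theorem stmt7 {G : Type*} [Group G] [Finite G]
    (hnice : ∀ g h : G, g ≠ 1 → h ≠ 1 →
      ∃ k : G, k ≠ 1 ∧ k ∈ Subgroup.zpowers g ∧ k ∈ Subgroup.zpowers h)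
    {P Q : Type*} [PartialOrder P] [PartialOrder Q] [Finite P] [Finite Q]
    [MulAction G P] [MulAction G Q]
    (hmonoP : ∀ (g : G) (p q : P), p ≤ q → g • p ≤ g • q)
    (hmonoQ : ∀ (g : G) (p q : Q), p ≤ q → g • p ≤ g • q)
    (hfreeP : ∀ (g : G) (p : P), g • p = p → g = 1)
    (hfreeQ : ∀ (g : G) (q : Q), g • q = q → g = 1)
    (hP0 : ¬ ∃ f : P → G × Fin 1, IsGMapToQ G 0 f)
    (hQ0 : ¬ ∃ f : Q → G × Fin 1, IsGMapToQ G 0 f) :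
    ¬ ∃ f : P × Q → G × Fin 1, IsGMapToQ G 0 f := by
  rintro ⟨f, hf1, hf2⟩
  -- extract from hP0 a nontrivial g fixing a component of P
  have hP' : ¬ ∀ (g : G) (p : P), EqvGen (· ≤ ·) p (g • p) → g = 1 :=
    fun h => hP0 (exists_map_aux hmonoP h)
  have hQ' : ¬ ∀ (g : G) (q : Q), EqvGen (· ≤ ·) q (g • q) → g = 1 :=
    fun h => hQ0 (exists_map_aux hmonoQ h)
  push_neg at hP' hQ'
  obtain ⟨g, p, hgp, hg1⟩ := hP'
  obtain ⟨h, q, hhq, hh1⟩ := hQ'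
  obtain ⟨k, hk1, hkg, hkh⟩ := hnice g h hg1 hh1
  have hkp : EqvGen (· ≤ ·) p (k • p) := zpowers_eqvgen_aux hmonoP hgp hkg
  have hkq : EqvGen (· ≤ ·) q (k • q) := zpowers_eqvgen_aux hmonoQ hhq hkh
  -- (p, q) ~ k • (p, q) in the product
  have hprod : EqvGen (fun x y : P × Q => x ≤ y) (p, q) (k • (p, q)) := by
    have h1 := eqvgen_prod_fst (Q := Q) q hkp
    have h2 := eqvgen_prod_snd (k • p) hkq
    have : k • (p, q) = (k • p, k • q) := rfl
    rw [this]
    exact EqvGen.trans _ _ _ h1 h2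
  -- f is constant along EqvGen
  have hconst : ∀ x y : P × Q, x ≤ y → f x = f y := by
    intro x y hxy
    rcases hf1 x y hxy with h | h
    · exact h
    · exact absurd h (by rw [Subsingleton.elim (f x).2 (f y).2]; exact lt_irrefl _)
  have hconst' : ∀ x y : P × Q, EqvGen (fun x y : P × Q => x ≤ y) x y → f x = f y := by
    intro x y hxy
    induction hxy with
    | rel a b h => exact hconst a b h
    | refl a => rfl
    | symm a b _ ih => exact ih.symm
    | trans a b c _ _ ih1 ih2 => exact ih1.trans ih2
  have heq : f (p, q) = f (k • (p, q)) := hconst' _ _ hprod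
  rw [hf2 k (p, q)] at heq
  have : (f (p, q)).1 = k * (f (p, q)).1 := congrArg Prod.fst heq
  exact hk1 (by
    have := mul_right_cancel (a := k) (b := (f (p, q)).1) (c := 1) ?_
    · exact this
    · rw [one_mul]; exact this.symm)
end
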